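/- arXiv:2511.04252 — 2 statements merged into one kernel-verified Lean document; each statement's English description precedes it below -/
import Mathlib

section
/- Let $E_x$ and $E_y$ be real Hilbert spaces. For every $M > 0$ there exist nonnegative constants $c_1,\dots,c_7$ (depending only on $M$) with the following property. For $i \in \{1,2\}$, let $A_i : E_x \to E_x$, $C_i : E_x \to E_y$, $Q_i, P_i : E_x \to E_x$, $R_i : E_y \to E_y$ be bounded linear operators, $\hat\mu_i \in E_x$, $y_i \in E_y$; define $P_i^- := A_i P_i A_i^* + Q_i$, $S_i := C_i P_i^- C_i^* + R_i$, assume $S_i$ is invertible with bounded inverse, and set $K_i := P_i^- C_i^* S_i^{-1}$ and updated mean $\hat\mu_i^+ := A_i \hat\mu_i + K_i(y_i - C_i(A_i \hat\mu_i))$. If $\|A_i\|, \|C_i\|, \|Q_i\|, \|R_i\|, \|S_i^{-1}\|, \|y_i\|, \|\hat\mu_i\|, \|P_i\| \le M$ for $i = 1, 2$, then $\|\hat\mu_1^+ - \hat\mu_2^+\| \le c_1\|A_1 - A_2\| + c_2\|C_1 - C_2\| + c_3\|Q_1 - Q_2\| + c_4\|R_1 - R_2\| + c_5\|y_1 - y_2\|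 + c_6\|\hat\mu_1 - \hat\mu_2\| + c_7\|P_1 - P_2\|$. -/
set_option maxHeartbeats 1000000

open ContinuousLinearMap

lemma comp_sub_comp_le {E F G : Type*} [NormedAddCommGroup E] [NormedSpace ℝ E]
    [NormedAddCommGroup F] [NormedSpace ℝ F] [NormedAddCommGroup G] [NormedSpace ℝ G]
    (T₁ T₂ : F →L[ℝ] G) (U₁ U₂ : E →L[ℝ] F) :
    ‖T₁ ∘L U₁ - T₂ ∘L U₂‖ ≤ ‖T₁ - T₂‖ * ‖U₁‖ + ‖T₂‖ * ‖U₁ - U₂‖ := by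
  have h : T₁ ∘L U₁ - T₂ ∘L U₂ = (T₁ - T₂) ∘L U₁ + T₂ ∘L (U₁ - U₂) := by
    ext x; simp [ContinuousLinearMap.comp_apply, map_sub]
  rw [h]
  exact (norm_add_le _ _).trans (add_le_add (opNorm_comp_le _ _) (opNorm_comp_le _ _))

lemma apply_sub_apply_le {E F : Type*} [NormedAddCommGroup E] [NormedSpace ℝ E]
    [NormedAddCommGroup F] [NormedSpace ℝ F]
    (T₁ T₂ : E →L[ℝ] F) (x₁ x₂ : E) :
    ‖T₁ x₁ - T₂ x₂‖ ≤ ‖T₁ - T₂‖ * ‖x₁‖ + ‖T₂‖ * ‖x₁ - x₂‖ := by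
  have h : T₁ x₁ - T₂ x₂ = (T₁ - T₂) x₁ + T₂ (x₁ - x₂) := by simp [map_sub]
  rw [h]
  exact (norm_add_le _ _).trans (add_le_add (le_opNorm _ _) (le_opNorm _ _))

/-- Kalman error decomposition for the updated mean: for any bound `M` on the data
of two one-step Kalman rules, the difference of the updated means is controlled by
the differences of the corresponding ingredients. -/
theorem kalman_mean_error_decomposition
    {Ex Ey : Type*}
    [NormedAddCommGroup Ex] [InnerProductSpace ℝ Ex] [CompleteSpace Ex]
    [NormedAddCommGroup Ey] [InnerProductSpace ℝ Ey] [CompleteSpace Ey]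
    (M : ℝ) (hM : 0 < M) :
    ∃ c₁ c₂ c₃ c₄ c₅ c₆ c₇ : ℝ,
      0 ≤ c₁ ∧ 0 ≤ c₂ ∧ 0 ≤ c₃ ∧ 0 ≤ c₄ ∧ 0 ≤ c₅ ∧ 0 ≤ c₆ ∧ 0 ≤ c₇ ∧
      ∀ (A₁ A₂ Q₁ Q₂ P₁ P₂ : Ex →L[ℝ] Ex) (C₁ C₂ : Ex →L[ℝ] Ey)
        (R₁ R₂ S₁inv S₂inv : Ey →L[ℝ] Ey) (μ₁ μ₂ : Ex) (y₁ y₂ : Ey),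
        (C₁ ∘L (A₁ ∘L P₁ ∘L adjoint A₁ + Q₁) ∘L adjoint C₁ + R₁) ∘L S₁inv = 1 →
        S₁inv ∘L (C₁ ∘L (A₁ ∘L P₁ ∘L adjoint A₁ + Q₁) ∘L adjoint C₁ + R₁) = 1 →
        (C₂ ∘L (A₂ ∘L P₂ ∘L adjoint A₂ + Q₂) ∘L adjoint C₂ + R₂) ∘L S₂inv = 1 →
        S₂inv ∘L (C₂ ∘L (A₂ ∘L P₂ ∘L adjoint A₂ + Q₂) ∘L adjoint C₂ + R₂) = 1 →
        ‖A₁‖ ≤ M → ‖C₁‖ ≤ M → ‖Q₁‖ ≤ M → ‖R₁‖ ≤ M → ‖S₁inv‖ ≤ M →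
        ‖y₁‖ ≤ M → ‖μ₁‖ ≤ M → ‖P₁‖ ≤ M →
        ‖A₂‖ ≤ M → ‖C₂‖ ≤ M → ‖Q₂‖ ≤ M → ‖R₂‖ ≤ M → ‖S₂inv‖ ≤ M →
        ‖y₂‖ ≤ M → ‖μ₂‖ ≤ M → ‖P₂‖ ≤ M →
        ‖(A₁ μ₁ + ((A₁ ∘L P₁ ∘L adjoint A₁ + Q₁) ∘L (adjoint C₁) ∘L S₁inv)
              (y₁ - C₁ (A₁ μ₁))) -
          (A₂ μ₂ + ((A₂ ∘L P₂ ∘L adjoint A₂ + Q₂) ∘L (adjoint C₂) ∘L S₂inv)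
              (y₂ - C₂ (A₂ μ₂)))‖ ≤
          c₁ * ‖A₁ - A₂‖ + c₂ * ‖C₁ - C₂‖ + c₃ * ‖Q₁ - Q₂‖ + c₄ * ‖R₁ - R₂‖ +
            c₅ * ‖y₁ - y₂‖ + c₆ * ‖μ₁ - μ₂‖ + c₇ * ‖P₁ - P₂‖ := by
  lift M to NNReal using hM.le with N hN
  refine ⟨2*(N:ℝ)^13 + 4*N^11 + 2*N^9 + 3*N^7 + 3*N^5 + N,
          2*(N:ℝ)^13 + 6*N^11 + 6*N^9 + 4*N^7 + 3*N^5 + N^3,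
          (N:ℝ)^11 + 2*N^9 + N^7 + N^5 + N^3,
          (N:ℝ)^9 + 2*N^7 + N^5,
          (N:ℝ)^5 + N^3,
          (N:ℝ)^7 + N^5 + N,
          (N:ℝ)^13 + 2*N^11 + N^9 + N^7 + N^5,
          by positivity, by positivity, by positivity, by positivity,
          by positivity, by positivity, by positivity, ?_⟩
  set M : ℝ := (N : ℝ) with hMdef
  intro A₁ A₂ Q₁ Q₂ P₁ P₂ C₁ C₂ R₁ R₂ S₁inv S₂inv μ₁ μ₂ y₁ y₂
    h1l h1r h2l h2r hA1 hC1 hQ1 hR1 hS1 hy1 hμ1 hP1 hA2 hC2 hQ2 hR2 hS2 hy2 hμ2 hP2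
  have hM0 : (0:ℝ) ≤ M := N.coe_nonneg
  -- adjoint norm facts
  have hadjA1 : ‖adjoint A₁‖ = ‖A₁‖ := LinearIsometryEquiv.norm_map _ _
  have hadjA2 : ‖adjoint A₂‖ = ‖A₂‖ := LinearIsometryEquiv.norm_map _ _
  have hadjC1 : ‖adjoint C₁‖ = ‖C₁‖ := LinearIsometryEquiv.norm_map _ _
  have hadjC2 : ‖adjoint C₂‖ = ‖C₂‖ := LinearIsometryEquiv.norm_map _ _
  have hadjAd : ‖adjoint A₁ - adjoint A₂‖ = ‖A₁ - A₂‖ := by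
    rw [← map_sub]; exact LinearIsometryEquiv.norm_map _ _
  have hadjCd : ‖adjoint C₁ - adjoint C₂‖ = ‖C₁ - C₂‖ := by
    rw [← map_sub]; exact LinearIsometryEquiv.norm_map _ _
  set Pm₁ := A₁ ∘L P₁ ∘L adjoint A₁ + Q₁ with hPm1def
  set Pm₂ := A₂ ∘L P₂ ∘L adjoint A₂ + Q₂ with hPm2def
  set S₁ := C₁ ∘L Pm₁ ∘L adjoint C₁ + R₁ with hS1def
  set S₂ := C₂ ∘L Pm₂ ∘L adjoint C₂ + R₂ with hS2def
  -- basic size bounds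
  have hPA1 : ‖P₁ ∘L adjoint A₁‖ ≤ M * M := by
    refine (opNorm_comp_le _ _).trans ?_
    rw [hadjA1]; exact mul_le_mul hP1 hA1 (norm_nonneg _) hM0
  have hPm1n : ‖Pm₁‖ ≤ M^3 + M := by
    rw [hPm1def]
    refine (norm_add_le _ _).trans ?_
    have h1 : ‖A₁ ∘L P₁ ∘L adjoint A₁‖ ≤ M * (M * M) := by
      refine (opNorm_comp_le _ _).trans ?_
      exact mul_le_mul hA1 hPA1 (norm_nonneg _) hM0
    calc ‖A₁ ∘L P₁ ∘L adjoint A₁‖ + ‖Q₁‖ ≤ M * (M * M) + M := add_le_add h1 hQ1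
      _ = M^3 + M := by ring
  have hPA2 : ‖P₂ ∘L adjoint A₂‖ ≤ M * M := by
    refine (opNorm_comp_le _ _).trans ?_
    rw [hadjA2]; exact mul_le_mul hP2 hA2 (norm_nonneg _) hM0
  have hPm2n : ‖Pm₂‖ ≤ M^3 + M := by
    rw [hPm2def]
    refine (norm_add_le _ _).trans ?_
    have h1 : ‖A₂ ∘L P₂ ∘L adjoint A₂‖ ≤ M * (M * M) := by
      refine (opNorm_comp_le _ _).trans ?_
      exact mul_le_mul hA2 hPA2 (norm_nonneg _) hM0
    calc ‖A₂ ∘L P₂ ∘L adjoint A₂‖ + ‖Q₂‖ ≤ M * (M * M) + M := add_le_add h1 hQ2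
      _ = M^3 + M := by ring
  -- difference of a priori covariances
  have hPAd : ‖P₁ ∘L adjoint A₁ - P₂ ∘L adjoint A₂‖ ≤ ‖P₁ - P₂‖ * M + M * ‖A₁ - A₂‖ := by
    refine (comp_sub_comp_le _ _ _ _).trans ?_
    rw [hadjAd, hadjA1]
    gcongr
  have hPmd : ‖Pm₁ - Pm₂‖ ≤
      (‖A₁ - A₂‖ * (M * M) + M * (‖P₁ - P₂‖ * M + M * ‖A₁ - A₂‖)) + ‖Q₁ - Q₂‖ := by
    have heq : Pm₁ - Pm₂ = (A₁ ∘L P₁ ∘L adjoint A₁ - A₂ ∘L P₂ ∘L adjoint A₂) + (Q₁ - Q₂) := by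
      rw [hPm1def, hPm2def]; abel
    rw [heq]
    refine (norm_add_le _ _).trans ?_
    gcongr
    refine (comp_sub_comp_le _ _ _ _).trans ?_
    gcongr
  set DPm : ℝ := (‖A₁ - A₂‖ * (M * M) + M * (‖P₁ - P₂‖ * M + M * ‖A₁ - A₂‖)) + ‖Q₁ - Q₂‖
    with hDPm
  have hDPm0 : 0 ≤ DPm := le_trans (norm_nonneg _) hPmd
  -- difference of innovation covariances
  have hPmCd : ‖Pm₁ ∘L adjoint C₁ - Pm₂ ∘L adjoint C₂‖ ≤ DPm * M + (M^3 + M) * ‖C₁ - C₂‖ := by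
    refine (comp_sub_comp_le _ _ _ _).trans ?_
    rw [hadjCd, hadjC1]
    gcongr
  have hSd : ‖S₁ - S₂‖ ≤
      (‖C₁ - C₂‖ * ((M^3 + M) * M) + M * (DPm * M + (M^3 + M) * ‖C₁ - C₂‖)) + ‖R₁ - R₂‖ := by
    have heq : S₁ - S₂ = (C₁ ∘L Pm₁ ∘L adjoint C₁ - C₂ ∘L Pm₂ ∘L adjoint C₂) + (R₁ - R₂) := by
      rw [hS1def, hS2def]; abel
    rw [heq]
    refine (norm_add_le _ _).trans ?_
    gcongr
    refine (comp_sub_comp_le _ _ _ _).trans ?_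
    have hPmC1 : ‖Pm₁ ∘L adjoint C₁‖ ≤ (M^3 + M) * M := by
      refine (opNorm_comp_le _ _).trans ?_
      rw [hadjC1]
      exact mul_le_mul hPm1n hC1 (norm_nonneg _) (by positivity)
    gcongr
  set DS : ℝ := (‖C₁ - C₂‖ * ((M^3 + M) * M) + M * (DPm * M + (M^3 + M) * ‖C₁ - C₂‖)) + ‖R₁ - R₂‖
    with hDS
  have hDS0 : 0 ≤ DS := le_trans (norm_nonneg _) hSd
  -- difference of inverses
  have hSinvd : ‖S₁inv - S₂inv‖ ≤ M * (DS * M) := by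
    have e1 : S₂ * S₂inv = 1 := by rw [mul_def]; exact h2l
    have e2 : S₁inv * S₁ = 1 := by rw [mul_def]; exact h1r
    have key : S₁inv - S₂inv = S₁inv * (S₂ - S₁) * S₂inv := by
      calc S₁inv - S₂inv = S₁inv * (S₂ * S₂inv) - (S₁inv * S₁) * S₂inv := by
            rw [e1, e2]; simp
        _ = S₁inv * (S₂ - S₁) * S₂inv := by noncomm_ring
    rw [key]
    calc ‖S₁inv * (S₂ - S₁) * S₂inv‖ ≤ ‖S₁inv * (S₂ - S₁)‖ * ‖S₂inv‖ := norm_mul_le _ _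
      _ ≤ (‖S₁inv‖ * ‖S₂ - S₁‖) * ‖S₂inv‖ := by gcongr; exact norm_mul_le _ _
      _ = ‖S₁inv‖ * (‖S₁ - S₂‖ * ‖S₂inv‖) := by rw [norm_sub_rev]; ring
      _ ≤ M * (DS * M) := by gcongr
  -- difference of gains
  have hCSd : ‖adjoint C₁ ∘L S₁inv - adjoint C₂ ∘L S₂inv‖ ≤ ‖C₁ - C₂‖ * M + M * (M * (DS * M)) := by
    refine (comp_sub_comp_le _ _ _ _).trans ?_
    rw [hadjCd, hadjC2]
    gcongr
  have hCS1 : ‖adjoint C₁ ∘L S₁inv‖ ≤ M * M := by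
    refine (opNorm_comp_le _ _).trans ?_
    rw [hadjC1]
    exact mul_le_mul hC1 hS1 (norm_nonneg _) hM0
  have hKd : ‖Pm₁ ∘L (adjoint C₁ ∘L S₁inv) - Pm₂ ∘L (adjoint C₂ ∘L S₂inv)‖ ≤
      DPm * (M * M) + (M^3 + M) * (‖C₁ - C₂‖ * M + M * (M * (DS * M))) := by
    refine (comp_sub_comp_le _ _ _ _).trans ?_
    gcongr
  set DK : ℝ := DPm * (M * M) + (M^3 + M) * (‖C₁ - C₂‖ * M + M * (M * (DS * M))) with hDK
  have hDK0 : 0 ≤ DK := le_trans (norm_nonneg _) hKd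
  have hK2 : ‖Pm₂ ∘L (adjoint C₂ ∘L S₂inv)‖ ≤ (M^3 + M) * (M * M) := by
    refine (opNorm_comp_le _ _).trans ?_
    have : ‖adjoint C₂ ∘L S₂inv‖ ≤ M * M := by
      refine (opNorm_comp_le _ _).trans ?_
      rw [hadjC2]
      exact mul_le_mul hC2 hS2 (norm_nonneg _) hM0
    exact mul_le_mul hPm2n this (norm_nonneg _) (by positivity)
  -- innovations
  have hCAμ1 : ‖C₁ (A₁ μ₁)‖ ≤ M * (M * M) := by
    refine (le_opNorm _ _).trans ?_
    refine mul_le_mul hC1 ((le_opNorm _ _).trans (mul_le_mul hA1 hμ1 (norm_nonneg _) hM0))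
      (norm_nonneg _) hM0
  have hz1 : ‖y₁ - C₁ (A₁ μ₁)‖ ≤ M + M^3 := by
    refine (norm_sub_le _ _).trans ?_
    calc ‖y₁‖ + ‖C₁ (A₁ μ₁)‖ ≤ M + M * (M * M) := add_le_add hy1 hCAμ1
      _ = M + M^3 := by ring
  have hAμd : ‖A₁ μ₁ - A₂ μ₂‖ ≤ ‖A₁ - A₂‖ * M + M * ‖μ₁ - μ₂‖ := by
    refine (apply_sub_apply_le _ _ _ _).trans ?_
    gcongr
  have hzd : ‖(y₁ - C₁ (A₁ μ₁)) - (y₂ - C₂ (A₂ μ₂))‖ ≤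
      ‖y₁ - y₂‖ + (‖C₁ - C₂‖ * (M * M) + M * (‖A₁ - A₂‖ * M + M * ‖μ₁ - μ₂‖)) := by
    have heq : (y₁ - C₁ (A₁ μ₁)) - (y₂ - C₂ (A₂ μ₂))
        = (y₁ - y₂) - (C₁ (A₁ μ₁) - C₂ (A₂ μ₂)) := by abel
    rw [heq]
    refine (norm_sub_le _ _).trans ?_
    gcongr
    refine (apply_sub_apply_le _ _ _ _).trans ?_
    have hAμ1 : ‖A₁ μ₁‖ ≤ M * M := by
      refine (le_opNorm _ _).trans ?_
      exact mul_le_mul hA1 hμ1 (norm_nonneg _) hM0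
    gcongr
  set Dz : ℝ := ‖y₁ - y₂‖ + (‖C₁ - C₂‖ * (M * M) + M * (‖A₁ - A₂‖ * M + M * ‖μ₁ - μ₂‖))
    with hDz
  have hDz0 : 0 ≤ Dz := le_trans (norm_nonneg _) hzd
  -- final assembly
  have heq : (A₁ μ₁ + (Pm₁ ∘L (adjoint C₁) ∘L S₁inv) (y₁ - C₁ (A₁ μ₁)))
      - (A₂ μ₂ + (Pm₂ ∘L (adjoint C₂) ∘L S₂inv) (y₂ - C₂ (A₂ μ₂)))
      = (A₁ μ₁ - A₂ μ₂) +
        ((Pm₁ ∘L (adjoint C₁) ∘L S₁inv) (y₁ - C₁ (A₁ μ₁))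
          - (Pm₂ ∘L (adjoint C₂) ∘L S₂inv) (y₂ - C₂ (A₂ μ₂))) := by abel
  rw [heq]
  have hKz : ‖(Pm₁ ∘L (adjoint C₁) ∘L S₁inv) (y₁ - C₁ (A₁ μ₁))
      - (Pm₂ ∘L (adjoint C₂) ∘L S₂inv) (y₂ - C₂ (A₂ μ₂))‖ ≤
      DK * (M + M^3) + ((M^3 + M) * (M * M)) * Dz := by
    refine (apply_sub_apply_le _ _ _ _).trans ?_
    gcongr
  refine ((norm_add_le _ _).trans (add_le_add hAμd hKz)).trans ?_
  rw [hDK, hDz, hDS, hDPm]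
  apply le_of_eq
  ring
end

section
/- Let $E_x$ and $E_y$ be real Hilbert spaces. For every $M > 0$ there exist nonnegative constants $c_1,\dots,c_7$ (depending only on $M$) with the following property. For $i \in \{1,2\}$, let $A_i : E_x \to E_x$, $C_i : E_x \to E_y$, $Q_i, P_i : E_x \to E_x$, $R_i : E_y \to E_y$ be bounded linear operators, $\hat\mu_i \in E_x$, $y_i \in E_y$; define $P_i^- := A_i P_i A_i^* + Q_i$, $S_i := C_i P_i^- C_i^* + R_i$, assume $S_i$ is invertible with bounded inverse, and set $K_i := P_i^- C_i^* S_i^{-1}$ and a posteriori covariance $P_i^+ := (I - K_i C_i) P_i^-$. If $\|A_i\|, \|C_i\|, \|Q_i\|, \|R_i\|, \|S_i^{-1}\|, \|y_i\|, \|\hat\mu_i\|, \|P_i\| \le M$ for $i = 1, 2$, then $\|P_1^+ - P_2^+\| \le c_1\|A_1 - A_2\| + c_2\|C_1 - C_2\| + c_3\|Q_1 - Q_2\| + c_4\|R_1 - R_2\| + c_5\|y_1 - y_2\| + c_6\|\hat\mu_1 - \hat\mu_2\| + c_7\|P_1 - P_2\|$. -/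
open ContinuousLinearMap

lemma kalman_aux_norm_adjoint {Ex Ey : Type*}
    [NormedAddCommGroup Ex] [InnerProductSpace ℝ Ex] [CompleteSpace Ex]
    [NormedAddCommGroup Ey] [InnerProductSpace ℝ Ey] [CompleteSpace Ey]
    (A : Ex →L[ℝ] Ey) : ‖adjoint A‖ = ‖A‖ := adjoint.norm_map A

lemma kalman_aux_norm_adjoint_sub {Ex Ey : Type*}
    [NormedAddCommGroup Ex] [InnerProductSpace ℝ Ex] [CompleteSpace Ex]
    [NormedAddCommGroup Ey] [InnerProductSpace ℝ Ey] [CompleteSpace Ey]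
    (A B : Ex →L[ℝ] Ey) : ‖adjoint A - adjoint B‖ = ‖A - B‖ := by
  rw [← map_sub]; exact adjoint.norm_map _

/-- Difference of compositions bound. -/
lemma kalman_aux_diff_comp {E F G : Type*} [NormedAddCommGroup E] [NormedSpace ℝ E]
    [NormedAddCommGroup F] [NormedSpace ℝ F] [NormedAddCommGroup G] [NormedSpace ℝ G]
    (f₁ f₂ : F →L[ℝ] G) (g₁ g₂ : E →L[ℝ] F) :
    ‖f₁ ∘L g₁ - f₂ ∘L g₂‖ ≤ ‖f₁ - f₂‖ * ‖g₁‖ + ‖f₂‖ * ‖g₁ - g₂‖ := by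
  have h : f₁ ∘L g₁ - f₂ ∘L g₂ = (f₁ - f₂) ∘L g₁ + f₂ ∘L (g₁ - g₂) := by
    simp [sub_comp, comp_sub]
  rw [h]
  exact (norm_add_le _ _).trans (add_le_add (opNorm_comp_le _ _) (opNorm_comp_le _ _))

set_option maxHeartbeats 1000000 in
/-- Kalman error decomposition for the a posteriori covariance: for any bound `M`
on the data of two one-step Kalman rules, the difference of the a posteriori
covariances `Pᵢ⁺ = (I - Kᵢ Cᵢ) Pᵢ⁻` is controlled by the differences of the
corresponding ingredients. -/
theorem kalman_covariance_error_decomposition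
    {Ex Ey : Type*}
    [NormedAddCommGroup Ex] [InnerProductSpace ℝ Ex] [CompleteSpace Ex]
    [NormedAddCommGroup Ey] [InnerProductSpace ℝ Ey] [CompleteSpace Ey]
    (M : ℝ) (hM : 0 < M) :
    ∃ c₁ c₂ c₃ c₄ c₅ c₆ c₇ : ℝ,
      0 ≤ c₁ ∧ 0 ≤ c₂ ∧ 0 ≤ c₃ ∧ 0 ≤ c₄ ∧ 0 ≤ c₅ ∧ 0 ≤ c₆ ∧ 0 ≤ c₇ ∧
      ∀ (A₁ A₂ Q₁ Q₂ P₁ P₂ : Ex →L[ℝ] Ex) (C₁ C₂ : Ex →L[ℝ] Ey)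
        (R₁ R₂ S₁inv S₂inv : Ey →L[ℝ] Ey) (μ₁ μ₂ : Ex) (y₁ y₂ : Ey),
        (C₁ ∘L (A₁ ∘L P₁ ∘L adjoint A₁ + Q₁) ∘L adjoint C₁ + R₁) ∘L S₁inv = 1 →
        S₁inv ∘L (C₁ ∘L (A₁ ∘L P₁ ∘L adjoint A₁ + Q₁) ∘L adjoint C₁ + R₁) = 1 →
        (C₂ ∘L (A₂ ∘L P₂ ∘L adjoint A₂ + Q₂) ∘L adjoint C₂ + R₂) ∘L S₂inv = 1 →
        S₂inv ∘L (C₂ ∘L (A₂ ∘L P₂ ∘L adjoint A₂ + Q₂) ∘L adjoint C₂ + R₂) = 1 →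
        ‖A₁‖ ≤ M → ‖C₁‖ ≤ M → ‖Q₁‖ ≤ M → ‖R₁‖ ≤ M → ‖S₁inv‖ ≤ M →
        ‖y₁‖ ≤ M → ‖μ₁‖ ≤ M → ‖P₁‖ ≤ M →
        ‖A₂‖ ≤ M → ‖C₂‖ ≤ M → ‖Q₂‖ ≤ M → ‖R₂‖ ≤ M → ‖S₂inv‖ ≤ M →
        ‖y₂‖ ≤ M → ‖μ₂‖ ≤ M → ‖P₂‖ ≤ M →
        ‖((1 : Ex →L[ℝ] Ex) -
              ((A₁ ∘L P₁ ∘L adjoint A₁ + Q₁) ∘L (adjoint C₁) ∘L S₁inv) ∘L C₁) ∘L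
            (A₁ ∘L P₁ ∘L adjoint A₁ + Q₁) -
          ((1 : Ex →L[ℝ] Ex) -
              ((A₂ ∘L P₂ ∘L adjoint A₂ + Q₂) ∘L (adjoint C₂) ∘L S₂inv) ∘L C₂) ∘L
            (A₂ ∘L P₂ ∘L adjoint A₂ + Q₂)‖ ≤
          c₁ * ‖A₁ - A₂‖ + c₂ * ‖C₁ - C₂‖ + c₃ * ‖Q₁ - Q₂‖ + c₄ * ‖R₁ - R₂‖ +
            c₅ * ‖y₁ - y₂‖ + c₆ * ‖μ₁ - μ₂‖ + c₇ * ‖P₁ - P₂‖ := by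
  have main : ∃ K : ℝ, 0 ≤ K ∧
      ∀ (A₁ A₂ Q₁ Q₂ P₁ P₂ : Ex →L[ℝ] Ex) (C₁ C₂ : Ex →L[ℝ] Ey)
        (R₁ R₂ S₁inv S₂inv : Ey →L[ℝ] Ey),
        (C₁ ∘L (A₁ ∘L P₁ ∘L adjoint A₁ + Q₁) ∘L adjoint C₁ + R₁) ∘L S₁inv = 1 →
        S₁inv ∘L (C₁ ∘L (A₁ ∘L P₁ ∘L adjoint A₁ + Q₁) ∘L adjoint C₁ + R₁) = 1 →
        (C₂ ∘L (A₂ ∘L P₂ ∘L adjoint A₂ + Q₂) ∘L adjoint C₂ + R₂) ∘L S₂inv = 1 →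
        S₂inv ∘L (C₂ ∘L (A₂ ∘L P₂ ∘L adjoint A₂ + Q₂) ∘L adjoint C₂ + R₂) = 1 →
        ‖A₁‖ ≤ M → ‖C₁‖ ≤ M → ‖Q₁‖ ≤ M → ‖R₁‖ ≤ M → ‖S₁inv‖ ≤ M → ‖P₁‖ ≤ M →
        ‖A₂‖ ≤ M → ‖C₂‖ ≤ M → ‖Q₂‖ ≤ M → ‖R₂‖ ≤ M → ‖S₂inv‖ ≤ M → ‖P₂‖ ≤ M →
        ‖((1 : Ex →L[ℝ] Ex) -
              ((A₁ ∘L P₁ ∘L adjoint A₁ + Q₁) ∘L (adjoint C₁) ∘L S₁inv) ∘L C₁) ∘L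
            (A₁ ∘L P₁ ∘L adjoint A₁ + Q₁) -
          ((1 : Ex →L[ℝ] Ex) -
              ((A₂ ∘L P₂ ∘L adjoint A₂ + Q₂) ∘L (adjoint C₂) ∘L S₂inv) ∘L C₂) ∘L
            (A₂ ∘L P₂ ∘L adjoint A₂ + Q₂)‖ ≤
          K * (‖A₁ - A₂‖ + ‖C₁ - C₂‖ + ‖Q₁ - Q₂‖ + ‖R₁ - R₂‖ + ‖P₁ - P₂‖) := by
    set L : ℝ := M ^ 3 + M with hL
    set K1 : ℝ := 3 * M ^ 2 + 1 with hK1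
    set K2 : ℝ := 2 * M * L + M ^ 2 * K1 + 1 with hK2
    set K3 : ℝ := M ^ 2 * K2 with hK3
    set K4 : ℝ := M + M * K3 with hK4
    set K5 : ℝ := M ^ 2 * K1 + L * K4 with hK5
    set K6 : ℝ := M * K5 + L * M ^ 2 with hK6
    have hM0 : (0:ℝ) ≤ M := hM.le
    have hL0 : (0:ℝ) ≤ L := by rw [hL]; positivity
    have hK1_0 : (0:ℝ) ≤ K1 := by rw [hK1]; positivity
    have hK2_0 : (0:ℝ) ≤ K2 := by rw [hK2, hK1, hL]; positivity
    have hK3_0 : (0:ℝ) ≤ K3 := by rw [hK3]; positivity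
    have hK4_0 : (0:ℝ) ≤ K4 := by rw [hK4]; positivity
    have hK5_0 : (0:ℝ) ≤ K5 := by rw [hK5]; positivity
    have hK6_0 : (0:ℝ) ≤ K6 := by rw [hK6]; positivity
    refine ⟨L * K6 + (1 + L * M ^ 3) * K1, by positivity, ?_⟩
    intro A₁ A₂ Q₁ Q₂ P₁ P₂ C₁ C₂ R₁ R₂ S₁inv S₂inv h1 h2 h3 h4
      hA₁ hC₁ hQ₁ hR₁ hS₁ hP₁ hA₂ hC₂ hQ₂ hR₂ hS₂ hP₂
    set Pm₁ : Ex →L[ℝ] Ex := A₁ ∘L P₁ ∘L adjoint A₁ + Q₁ with hPm₁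
    set Pm₂ : Ex →L[ℝ] Ex := A₂ ∘L P₂ ∘L adjoint A₂ + Q₂ with hPm₂
    set a : ℝ := ‖A₁ - A₂‖ with ha
    set c : ℝ := ‖C₁ - C₂‖ with hc
    set q : ℝ := ‖Q₁ - Q₂‖ with hq
    set r : ℝ := ‖R₁ - R₂‖ with hr
    set p : ℝ := ‖P₁ - P₂‖ with hp
    set D : ℝ := a + c + q + r + p with hD
    have ha0 : 0 ≤ a := norm_nonneg _
    have hc0 : 0 ≤ c := norm_nonneg _
    have hq0 : 0 ≤ q := norm_nonneg _
    have hr0 : 0 ≤ r := norm_nonneg _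
    have hp0 : 0 ≤ p := norm_nonneg _
    have haD : a ≤ D := by rw [hD]; linarith only [hc0, hq0, hr0, hp0]
    have hcD : c ≤ D := by rw [hD]; linarith only [ha0, hq0, hr0, hp0]
    have hqD : q ≤ D := by rw [hD]; linarith only [ha0, hc0, hr0, hp0]
    have hrD : r ≤ D := by rw [hD]; linarith only [ha0, hc0, hq0, hr0, hp0]
    have hpD : p ≤ D := by rw [hD]; linarith only [ha0, hc0, hq0, hr0]
    have hD0 : 0 ≤ D := le_trans ha0 haD
    -- norms of adjoints
    have hadA₁ : ‖adjoint A₁‖ ≤ M := by rw [kalman_aux_norm_adjoint]; exact hA₁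
    have hadA₂ : ‖adjoint A₂‖ ≤ M := by rw [kalman_aux_norm_adjoint]; exact hA₂
    have hadC₁ : ‖adjoint C₁‖ ≤ M := by rw [kalman_aux_norm_adjoint]; exact hC₁
    have hadC₂ : ‖adjoint C₂‖ ≤ M := by rw [kalman_aux_norm_adjoint]; exact hC₂
    -- bound on Pm_i
    have hPmle : ∀ (A P Q : Ex →L[ℝ] Ex), ‖A‖ ≤ M → ‖P‖ ≤ M → ‖Q‖ ≤ M →
        ‖A ∘L P ∘L adjoint A + Q‖ ≤ L := by
      intro A P Q hA hP hQ
      have h1 : ‖A ∘L P ∘L adjoint A‖ ≤ M * (M * M) := by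
        refine (opNorm_comp_le _ _).trans ?_
        have hPA : ‖P ∘L adjoint A‖ ≤ M * M := by
          refine (opNorm_comp_le _ _).trans ?_
          exact mul_le_mul hP (by rw [kalman_aux_norm_adjoint]; exact hA) (norm_nonneg _) hM0
        exact mul_le_mul hA hPA (norm_nonneg _) hM0
      calc ‖A ∘L P ∘L adjoint A + Q‖ ≤ ‖A ∘L P ∘L adjoint A‖ + ‖Q‖ := norm_add_le _ _
        _ ≤ M * (M * M) + M := add_le_add h1 hQ
        _ = L := by rw [hL]; ring
    have hPm₁L : ‖Pm₁‖ ≤ L := hPmle A₁ P₁ Q₁ hA₁ hP₁ hQ₁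
    have hPm₂L : ‖Pm₂‖ ≤ L := hPmle A₂ P₂ Q₂ hA₂ hP₂ hQ₂
    -- difference of Pm
    have hdPm : ‖Pm₁ - Pm₂‖ ≤ K1 * D := by
      have hX : ‖P₁ ∘L adjoint A₁ - P₂ ∘L adjoint A₂‖ ≤ p * M + M * a := by
        refine (kalman_aux_diff_comp _ _ _ _).trans (add_le_add ?_ ?_)
        · exact mul_le_mul le_rfl hadA₁ (norm_nonneg _) hp0
        · rw [kalman_aux_norm_adjoint_sub]
          exact mul_le_mul hP₂ le_rfl ha0 hM0
      have hX1 : ‖P₁ ∘L adjoint A₁‖ ≤ M * M :=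
        (opNorm_comp_le _ _).trans (mul_le_mul hP₁ hadA₁ (norm_nonneg _) hM0)
      have h2' : ‖A₁ ∘L (P₁ ∘L adjoint A₁) - A₂ ∘L (P₂ ∘L adjoint A₂)‖ ≤
          a * (M * M) + M * (p * M + M * a) :=
        (kalman_aux_diff_comp _ _ _ _).trans (add_le_add
          (mul_le_mul le_rfl hX1 (norm_nonneg _) ha0)
          (mul_le_mul hA₂ hX (norm_nonneg _) hM0))
      have h3' : Pm₁ - Pm₂ =
          (A₁ ∘L (P₁ ∘L adjoint A₁) - A₂ ∘L (P₂ ∘L adjoint A₂)) + (Q₁ - Q₂) := by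
        rw [hPm₁, hPm₂]; abel
      calc ‖Pm₁ - Pm₂‖ ≤ ‖A₁ ∘L (P₁ ∘L adjoint A₁) - A₂ ∘L (P₂ ∘L adjoint A₂)‖ + q := by
            rw [h3']; exact norm_add_le _ _
        _ ≤ (a * (M * M) + M * (p * M + M * a)) + q := by linarith only [h2']
        _ ≤ K1 * D := by
            rw [hK1]
            have e1 : M ^ 2 * a ≤ M ^ 2 * D := mul_le_mul_of_nonneg_left haD (by positivity)
            have e2 : M ^ 2 * p ≤ M ^ 2 * D := mul_le_mul_of_nonneg_left hpD (by positivity)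
            linarith only [e1, e2, hqD]
    -- difference of S
    have hdS : ‖(C₁ ∘L Pm₁ ∘L adjoint C₁ + R₁) - (C₂ ∘L Pm₂ ∘L adjoint C₂ + R₂)‖ ≤ K2 * D := by
      have hX : ‖Pm₁ ∘L adjoint C₁ - Pm₂ ∘L adjoint C₂‖ ≤ K1 * D * M + L * c := by
        refine (kalman_aux_diff_comp _ _ _ _).trans (add_le_add ?_ ?_)
        · exact mul_le_mul hdPm hadC₁ (norm_nonneg _) (mul_nonneg hK1_0 hD0)
        · rw [kalman_aux_norm_adjoint_sub]
          exact mul_le_mul hPm₂L le_rfl hc0 hL0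
      have hX1 : ‖Pm₁ ∘L adjoint C₁‖ ≤ L * M :=
        (opNorm_comp_le _ _).trans (mul_le_mul hPm₁L hadC₁ (norm_nonneg _) hL0)
      have h2' : ‖C₁ ∘L (Pm₁ ∘L adjoint C₁) - C₂ ∘L (Pm₂ ∘L adjoint C₂)‖ ≤
          c * (L * M) + M * (K1 * D * M + L * c) :=
        (kalman_aux_diff_comp _ _ _ _).trans (add_le_add
          (mul_le_mul le_rfl hX1 (norm_nonneg _) hc0)
          (mul_le_mul hC₂ hX (norm_nonneg _) hM0))
      have h3' : (C₁ ∘L Pm₁ ∘L adjoint C₁ + R₁) - (C₂ ∘L Pm₂ ∘L adjoint C₂ + R₂) =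
          (C₁ ∘L (Pm₁ ∘L adjoint C₁) - C₂ ∘L (Pm₂ ∘L adjoint C₂)) + (R₁ - R₂) := by
        abel
      calc ‖(C₁ ∘L Pm₁ ∘L adjoint C₁ + R₁) - (C₂ ∘L Pm₂ ∘L adjoint C₂ + R₂)‖
          ≤ ‖C₁ ∘L (Pm₁ ∘L adjoint C₁) - C₂ ∘L (Pm₂ ∘L adjoint C₂)‖ + r := by
            rw [h3']; exact norm_add_le _ _
        _ ≤ (c * (L * M) + M * (K1 * D * M + L * c)) + r := by linarith only [h2']
        _ ≤ K2 * D := by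
            rw [hK2]
            have e1 : L * M * c ≤ L * M * D :=
              mul_le_mul_of_nonneg_left hcD (mul_nonneg hL0 hM0)
            linarith only [e1, hrD]
    -- difference of Sinv
    have hkey : S₁inv - S₂inv =
        S₁inv * (((C₂ ∘L Pm₂ ∘L adjoint C₂ + R₂) - (C₁ ∘L Pm₁ ∘L adjoint C₁ + R₁)) * S₂inv) := by
      have h2' : S₁inv * (C₁ ∘L Pm₁ ∘L adjoint C₁ + R₁) = 1 := h2
      have h3' : (C₂ ∘L Pm₂ ∘L adjoint C₂ + R₂) * S₂inv = 1 := h3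
      rw [sub_mul, mul_sub, h3', ← mul_assoc, h2', mul_one, one_mul]
    have hdSinv : ‖S₁inv - S₂inv‖ ≤ K3 * D := by
      rw [hkey]
      have hin : ‖((C₂ ∘L Pm₂ ∘L adjoint C₂ + R₂) - (C₁ ∘L Pm₁ ∘L adjoint C₁ + R₁)) * S₂inv‖ ≤
          (K2 * D) * M := by
        refine (norm_mul_le _ _).trans ?_
        refine mul_le_mul ?_ hS₂ (norm_nonneg _) (mul_nonneg hK2_0 hD0)
        rw [← norm_neg]
        simpa using hdS
      calc ‖S₁inv * (((C₂ ∘L Pm₂ ∘L adjoint C₂ + R₂) - (C₁ ∘L Pm₁ ∘L adjoint C₁ + R₁)) * S₂inv)‖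
          ≤ M * ((K2 * D) * M) :=
            (norm_mul_le _ _).trans
              (mul_le_mul hS₁ hin (norm_nonneg _) hM0)
        _ = K3 * D := by rw [hK3]; ring
    -- difference of J = adjoint C ∘L Sinv
    have hdJ : ‖adjoint C₁ ∘L S₁inv - adjoint C₂ ∘L S₂inv‖ ≤ K4 * D := by
      refine (kalman_aux_diff_comp _ _ _ _).trans ?_
      calc ‖adjoint C₁ - adjoint C₂‖ * ‖S₁inv‖ + ‖adjoint C₂‖ * ‖S₁inv - S₂inv‖
          ≤ c * M + M * (K3 * D) := by
            rw [kalman_aux_norm_adjoint_sub]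
            exact add_le_add (mul_le_mul le_rfl hS₁ (norm_nonneg _) hc0)
              (mul_le_mul hadC₂ hdSinv (norm_nonneg _) hM0)
        _ ≤ K4 * D := by
            rw [hK4]
            have e1 : M * c ≤ M * D := mul_le_mul_of_nonneg_left hcD hM0
            linarith only [e1]
    -- difference of H = Pm ∘L (adjoint C ∘L Sinv)
    have hJ1 : ‖adjoint C₁ ∘L S₁inv‖ ≤ M * M :=
      (opNorm_comp_le _ _).trans (mul_le_mul hadC₁ hS₁ (norm_nonneg _) hM0)
    have hJ2 : ‖adjoint C₂ ∘L S₂inv‖ ≤ M * M :=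
      (opNorm_comp_le _ _).trans (mul_le_mul hadC₂ hS₂ (norm_nonneg _) hM0)
    have hdH : ‖Pm₁ ∘L (adjoint C₁ ∘L S₁inv) - Pm₂ ∘L (adjoint C₂ ∘L S₂inv)‖ ≤ K5 * D := by
      refine (kalman_aux_diff_comp _ _ _ _).trans ?_
      calc ‖Pm₁ - Pm₂‖ * ‖adjoint C₁ ∘L S₁inv‖ +
            ‖Pm₂‖ * ‖adjoint C₁ ∘L S₁inv - adjoint C₂ ∘L S₂inv‖
          ≤ (K1 * D) * (M * M) + L * (K4 * D) :=
            add_le_add (mul_le_mul hdPm hJ1 (norm_nonneg _) (mul_nonneg hK1_0 hD0))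
              (mul_le_mul hPm₂L hdJ (norm_nonneg _) hL0)
        _ = K5 * D := by rw [hK5]; ring
    -- difference of G = H ∘L C
    have hH2 : ‖Pm₂ ∘L (adjoint C₂ ∘L S₂inv)‖ ≤ L * (M * M) :=
      (opNorm_comp_le _ _).trans (mul_le_mul hPm₂L hJ2 (norm_nonneg _) hL0)
    have hdG : ‖(Pm₁ ∘L adjoint C₁ ∘L S₁inv) ∘L C₁ - (Pm₂ ∘L adjoint C₂ ∘L S₂inv) ∘L C₂‖ ≤
        K6 * D := by
      refine (kalman_aux_diff_comp _ _ _ _).trans ?_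
      calc ‖Pm₁ ∘L adjoint C₁ ∘L S₁inv - Pm₂ ∘L adjoint C₂ ∘L S₂inv‖ * ‖C₁‖ +
            ‖Pm₂ ∘L adjoint C₂ ∘L S₂inv‖ * ‖C₁ - C₂‖
          ≤ (K5 * D) * M + (L * (M * M)) * c :=
            add_le_add (mul_le_mul hdH hC₁ (norm_nonneg _) (mul_nonneg hK5_0 hD0))
              (mul_le_mul hH2 le_rfl hc0 (by positivity))
        _ ≤ K6 * D := by
            rw [hK6]
            have e1 : L * M ^ 2 * c ≤ L * M ^ 2 * D :=
              mul_le_mul_of_nonneg_left hcD (by positivity)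
            linarith only [e1]
    -- bound on G₂
    have hG2 : ‖(Pm₂ ∘L adjoint C₂ ∘L S₂inv) ∘L C₂‖ ≤ L * M ^ 3 := by
      refine (opNorm_comp_le _ _).trans ?_
      calc ‖Pm₂ ∘L adjoint C₂ ∘L S₂inv‖ * ‖C₂‖ ≤ (L * (M * M)) * M :=
            mul_le_mul hH2 hC₂ (norm_nonneg _) (by positivity)
        _ = L * M ^ 3 := by ring
    -- final
    calc ‖((1 : Ex →L[ℝ] Ex) - (Pm₁ ∘L (adjoint C₁) ∘L S₁inv) ∘L C₁) ∘L Pm₁ -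
          ((1 : Ex →L[ℝ] Ex) - (Pm₂ ∘L (adjoint C₂) ∘L S₂inv) ∘L C₂) ∘L Pm₂‖
        ≤ ‖((1 : Ex →L[ℝ] Ex) - (Pm₁ ∘L (adjoint C₁) ∘L S₁inv) ∘L C₁) -
            ((1 : Ex →L[ℝ] Ex) - (Pm₂ ∘L (adjoint C₂) ∘L S₂inv) ∘L C₂)‖ * ‖Pm₁‖ +
          ‖(1 : Ex →L[ℝ] Ex) - (Pm₂ ∘L (adjoint C₂) ∘L S₂inv) ∘L C₂‖ * ‖Pm₁ - Pm₂‖ :=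
          kalman_aux_diff_comp _ _ _ _
      _ ≤ (K6 * D) * L + (1 + L * M ^ 3) * (K1 * D) := by
          have e1 : ‖((1 : Ex →L[ℝ] Ex) - (Pm₁ ∘L (adjoint C₁) ∘L S₁inv) ∘L C₁) -
              ((1 : Ex →L[ℝ] Ex) - (Pm₂ ∘L (adjoint C₂) ∘L S₂inv) ∘L C₂)‖ ≤ K6 * D := by
            have e0 : ((1 : Ex →L[ℝ] Ex) - (Pm₁ ∘L (adjoint C₁) ∘L S₁inv) ∘L C₁) -
                ((1 : Ex →L[ℝ] Ex) - (Pm₂ ∘L (adjoint C₂) ∘L S₂inv) ∘L C₂) =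
                (Pm₂ ∘L (adjoint C₂) ∘L S₂inv) ∘L C₂ - (Pm₁ ∘L (adjoint C₁) ∘L S₁inv) ∘L C₁ := by
              abel
            rw [e0, ← norm_neg]
            simpa using hdG
          have e2 : ‖(1 : Ex →L[ℝ] Ex) - (Pm₂ ∘L (adjoint C₂) ∘L S₂inv) ∘L C₂‖ ≤
              1 + L * M ^ 3 := by
            refine (norm_sub_le _ _).trans ?_
            have h1' : ‖(1 : Ex →L[ℝ] Ex)‖ ≤ 1 := by rw [one_def]; exact norm_id_le
            exact add_le_add h1' hG2
          exact add_le_add (mul_le_mul e1 hPm₁L (norm_nonneg _) (mul_nonneg hK6_0 hD0))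
            (mul_le_mul e2 hdPm (norm_nonneg _) (by positivity))
      _ = (L * K6 + (1 + L * M ^ 3) * K1) * D := by ring
  obtain ⟨K, hK0, hK⟩ := main
  refine ⟨K, K, K, K, K, K, K, hK0, hK0, hK0, hK0, hK0, hK0, hK0, ?_⟩
  intro A₁ A₂ Q₁ Q₂ P₁ P₂ C₁ C₂ R₁ R₂ S₁inv S₂inv μ₁ μ₂ y₁ y₂ h1 h2 h3 h4
    hA₁ hC₁ hQ₁ hR₁ hS₁ hy₁ hμ₁ hP₁ hA₂ hC₂ hQ₂ hR₂ hS₂ hy₂ hμ₂ hP₂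
  have hmain := hK A₁ A₂ Q₁ Q₂ P₁ P₂ C₁ C₂ R₁ R₂ S₁inv S₂inv h1 h2 h3 h4
    hA₁ hC₁ hQ₁ hR₁ hS₁ hP₁ hA₂ hC₂ hQ₂ hR₂ hS₂ hP₂
  have hy : 0 ≤ K * ‖y₁ - y₂‖ := mul_nonneg hK0 (norm_nonneg _)
  have hμ : 0 ≤ K * ‖μ₁ - μ₂‖ := mul_nonneg hK0 (norm_nonneg _)
  have hring : K * (‖A₁ - A₂‖ + ‖C₁ - C₂‖ + ‖Q₁ - Q₂‖ + ‖R₁ - R₂‖ + ‖P₁ - P₂‖) =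
      K * ‖A₁ - A₂‖ + K * ‖C₁ - C₂‖ + K * ‖Q₁ - Q₂‖ + K * ‖R₁ - R₂‖ + K * ‖P₁ - P₂‖ := by ring
  linarith only [hmain, hy, hμ, hring]
end
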